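/- Simplicity Theorem for numbers: Let G be a game and x a number such that every left option G^L of G satisfies G^L ⧏ x and every right option G^R of G satisfies x ⧏ G^R. If, moreover, no option x' of x (no left or right option) satisfies the same condition in place of x (i.e., for every option x' of x, either some G^L has ¬(G^L ⧏ x') or some G^R has ¬(x' ⧏ G^R)), then G is equivalent to x. -/

import Mathlib

universe u

namespace SetTheory

/-- Pre-games, as in the Mathlib of December 2024 (since removed from Mathlib). -/
inductive PGame : Type (u + 1)
  | mk : ∀ α β : Type u, (α → PGame) → (β → PGame) → PGame

namespace PGame

/-- The type of left moves. -/
def LeftMoves : PGame → Type u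
  | mk l _ _ _ => l

/-- The type of right moves. -/
def RightMoves : PGame → Type u
  | mk _ r _ _ => r

/-- The left options. -/
def moveLeft : (g : PGame) → LeftMoves g → PGame
  | mk _ _ L _ => L

/-- The right options. -/
def moveRight : (g : PGame) → RightMoves g → PGame
  | mk _ _ _ R => R

/-- The pair `(x ≤ y, x ⧏ y)`, defined by simultaneous recursion. -/
noncomputable def leLF : PGame.{u} → PGame.{u} → Prop × Prop :=
  fun x => PGame.rec (motive := fun _ => PGame.{u} → Prop × Prop)
    (fun xl xr xL xR IHxl IHxr y => PGame.rec (motive := fun _ => Prop × Prop)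
      (fun yl yr yL yR IHyl IHyr =>
        ((∀ i, (IHxl i (mk yl yr yL yR)).2) ∧ ∀ j, (IHyr j).2,
          (∃ i, (IHyl i).1) ∨ ∃ j, (IHxr j (mk yl yr yL yR)).1)) y) x

instance le : LE PGame.{u} :=
  ⟨fun x y => (leLF x y).1⟩

/-- `x ⧏ y` means `¬ y ≤ x`. -/
def LF (x y : PGame.{u}) : Prop :=
  ¬y ≤ x

instance lt : LT PGame.{u} :=
  ⟨fun x y => x ≤ y ∧ ¬y ≤ x⟩

infixl:50 " ⧏ " => PGame.LF

/-- Equivalence of games: `x ≤ y` and `y ≤ x`. -/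
def Equiv (x y : PGame.{u}) : Prop :=
  x ≤ y ∧ y ≤ x

instance : HasEquiv PGame.{u} :=
  ⟨Equiv⟩

/-- A game is numeric if all its options are numeric and every left option is less than every
right option. -/
def Numeric : PGame.{u} → Prop
  | ⟨_, _, L, R⟩ => (∀ i j, L i < R j) ∧ (∀ i, Numeric (L i)) ∧ ∀ j, Numeric (R j)

end PGame

end SetTheory

/-!
Both inequalities `G ≤ x` and `x ≤ G` are checked through the recursive definition of `≤`.
For `G ≤ x` the only non-trivial condition is `G ⧏ xᴿ`: were `xᴿ ≤ G`, then `Gᴸ ⧏ x ≤ xᴿ`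
(a number lies below its right options) and `xᴿ ≤ G ⧏ Gᴿ`, so `xᴿ` would fit between the
options of `G` just as `x` does. The inequality `x ≤ G` is dual.
-/

namespace SetTheory.PGame

theorem leLF_mk_mk (xl xr : Type u) (xL : xl → PGame.{u}) (xR : xr → PGame.{u})
    (yl yr : Type u) (yL : yl → PGame.{u}) (yR : yr → PGame.{u}) :
    leLF (mk xl xr xL xR) (mk yl yr yL yR) =
      ((∀ i, (leLF (xL i) (mk yl yr yL yR)).2) ∧ ∀ j, (leLF (mk xl xr xL xR) (yR j)).2,
        (∃ i, (leLF (mk xl xr xL xR) (yL i)).1) ∨ ∃ j, (leLF (xR j) (mk yl yr yL yR)).1) :=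
  rfl

theorem leLF_snd_iff_not_fst : ∀ x y : PGame.{u},
    ((leLF x y).2 ↔ ¬(leLF y x).1) ∧ ((leLF y x).2 ↔ ¬(leLF x y).1) := by
  intro x
  induction x with
  | mk xl xr xL xR IHxl IHxr =>
    intro y
    induction y with
    | mk yl yr yL yR IHyl IHyr =>
      simp only [leLF_mk_mk, IHxl, IHxr, IHyl, IHyr, not_and_or, not_forall, not_not,
        iff_self, and_self]

theorem lf_iff_leLF_snd (x y : PGame.{u}) : x ⧏ y ↔ (leLF x y).2 :=
  (leLF_snd_iff_not_fst x y).1.symm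

theorem le_iff_forall_lf {x y : PGame.{u}} :
    x ≤ y ↔ (∀ i, x.moveLeft i ⧏ y) ∧ ∀ j, x ⧏ y.moveRight j := by
  cases x; cases y
  simp only [lf_iff_leLF_snd]
  exact Iff.rfl

theorem lf_iff_exists_le {x y : PGame.{u}} :
    x ⧏ y ↔ (∃ i, x ≤ y.moveLeft i) ∨ ∃ j, x.moveRight j ≤ y := by
  cases x; cases y
  rw [lf_iff_leLF_snd]
  exact Iff.rfl

protected theorem le_refl (x : PGame.{u}) : x ≤ x := by
  induction x with
  | mk xl xr xL xR IHxl IHxr =>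
    exact le_iff_forall_lf.2 ⟨fun i => lf_iff_exists_le.2 (.inl ⟨i, IHxl i⟩),
      fun j => lf_iff_exists_le.2 (.inr ⟨j, IHxr j⟩)⟩

theorem moveLeft_lf {x : PGame.{u}} (i : x.LeftMoves) : x.moveLeft i ⧏ x :=
  lf_iff_exists_le.2 (.inl ⟨i, PGame.le_refl _⟩)

theorem lf_moveRight {x : PGame.{u}} (j : x.RightMoves) : x ⧏ x.moveRight j :=
  lf_iff_exists_le.2 (.inr ⟨j, PGame.le_refl _⟩)

theorem moveLeft_lf_of_le {x y : PGame.{u}} (h : x ≤ y) (i : x.LeftMoves) : x.moveLeft i ⧏ y :=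
  (le_iff_forall_lf.1 h).1 i

theorem lf_moveRight_of_le {x y : PGame.{u}} (h : x ≤ y) (j : y.RightMoves) :
    x ⧏ y.moveRight j :=
  (le_iff_forall_lf.1 h).2 j

theorem le_trans_aux {x y z : PGame.{u}}
    (h₁ : ∀ {i}, y ≤ z → z ≤ x.moveLeft i → y ≤ x.moveLeft i)
    (h₂ : ∀ {j}, z.moveRight j ≤ x → x ≤ y → z.moveRight j ≤ y) (hxy : x ≤ y) (hyz : y ≤ z) :
    x ≤ z :=
  le_iff_forall_lf.2 ⟨fun i h => moveLeft_lf_of_le hxy i (h₁ hyz h),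
    fun j h => lf_moveRight_of_le hyz j (h₂ h hxy)⟩

-- The three rotations of transitivity have to be proved together: each one's induction step
-- calls the others on options.
theorem le_trans_rotations : ∀ x y z : PGame.{u},
    (x ≤ y → y ≤ z → x ≤ z) ∧ (y ≤ z → z ≤ x → y ≤ x) ∧ (z ≤ x → x ≤ y → z ≤ y) := by
  intro x
  induction x with
  | mk xl xr xL xR IHxl IHxr =>
  intro y
  induction y with
  | mk yl yr yL yR IHyl IHyr =>
  intro z
  induction z with
  | mk zl zr zL zR IHzl IHzr =>
  exact ⟨le_trans_aux (fun {i} => (IHxl i _ _).2.1) fun {j} => (IHzr j).2.2,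
    le_trans_aux (fun {i} => (IHyl i _).2.2) fun {j} => (IHxr j _ _).1,
    le_trans_aux (fun {i} => (IHzl i).1) fun {j} => (IHyr j _).2.1⟩

protected theorem le_trans {x y z : PGame.{u}} (h₁ : x ≤ y) (h₂ : y ≤ z) : x ≤ z :=
  (le_trans_rotations x y z).1 h₁ h₂

theorem lf_of_lf_of_le {x y z : PGame.{u}} (h₁ : x ⧏ y) (h₂ : y ≤ z) : x ⧏ z :=
  fun h => h₁ (PGame.le_trans h₂ h)

theorem lf_of_le_of_lf {x y z : PGame.{u}} (h₁ : x ≤ y) (h₂ : y ⧏ z) : x ⧏ z :=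
  fun h => h₂ (PGame.le_trans h h₁)

theorem Numeric.moveLeft {x : PGame.{u}} (o : Numeric x) (i : x.LeftMoves) :
    Numeric (x.moveLeft i) := by
  cases x
  exact o.2.1 i

theorem Numeric.moveRight {x : PGame.{u}} (o : Numeric x) (j : x.RightMoves) :
    Numeric (x.moveRight j) := by
  cases x
  exact o.2.2 j

theorem Numeric.left_lt_right {x : PGame.{u}} (o : Numeric x) (i : x.LeftMoves)
    (j : x.RightMoves) : x.moveLeft i < x.moveRight j := by
  cases x
  exact o.1 i j

theorem Numeric.moveLeft_le {x : PGame.{u}} (o : Numeric x) (i : x.LeftMoves) :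
    x.moveLeft i ≤ x := by
  induction x with
  | mk xl xr xL xR IHxl _ =>
    exact le_iff_forall_lf.2
      ⟨fun i' => lf_of_le_of_lf (IHxl i (o.moveLeft i) i') (moveLeft_lf i),
        fun j => (o.left_lt_right i j).2⟩

theorem Numeric.le_moveRight {x : PGame.{u}} (o : Numeric x) (j : x.RightMoves) :
    x ≤ x.moveRight j := by
  induction x with
  | mk xl xr xL xR _ IHxr =>
    exact le_iff_forall_lf.2
      ⟨fun i => (o.left_lt_right i j).2,
        fun j' => lf_of_lf_of_le (lf_moveRight j) (IHxr j (o.moveRight j) j')⟩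

def Fits (x G : PGame.{u}) : Prop :=
  (∀ i, G.moveLeft i ⧏ x) ∧ ∀ j, x ⧏ G.moveRight j

theorem not_fits_iff {x G : PGame.{u}} :
    ¬x.Fits G ↔ (∃ i, ¬G.moveLeft i ⧏ x) ∨ ∃ j, ¬x ⧏ G.moveRight j := by
  simp only [Fits, not_and_or, not_forall]

theorem le_of_fits {x G : PGame.{u}} (hx : ∀ k, x ≤ x.moveRight k) (h : x.Fits G)
    (hR : ∀ k, ¬(x.moveRight k).Fits G) : G ≤ x :=
  le_iff_forall_lf.2 ⟨h.1, fun k hle => hR k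
    ⟨fun i => lf_of_lf_of_le (h.1 i) (hx k), fun j => lf_of_le_of_lf hle (lf_moveRight j)⟩⟩

theorem ge_of_fits {x G : PGame.{u}} (hx : ∀ k, x.moveLeft k ≤ x) (h : x.Fits G)
    (hL : ∀ k, ¬(x.moveLeft k).Fits G) : x ≤ G :=
  le_iff_forall_lf.2 ⟨fun k hle => hL k
    ⟨fun i => lf_of_lf_of_le (moveLeft_lf i) hle, fun j => lf_of_le_of_lf (hx k) (h.2 j)⟩, h.2⟩

theorem Numeric.equiv_of_fits {x G : PGame.{u}} (hx : x.Numeric) (h : x.Fits G)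
    (hL : ∀ k, ¬(x.moveLeft k).Fits G) (hR : ∀ k, ¬(x.moveRight k).Fits G) : G ≈ x :=
  ⟨le_of_fits hx.le_moveRight h hR, ge_of_fits hx.moveLeft_le h hL⟩

end SetTheory.PGame

open SetTheory PGame

/-- Simplicity Theorem for numbers: if `x` is a number with `G^L ⧏ x ⧏ G^R` for
all left and right options of `G`, and no (left or right) option of `x` satisfies
the same condition in place of `x`, then `G ≈ x`. -/
theorem simplicity_theorem (G x : PGame) (hx : x.Numeric)
    (hL : ∀ i : G.LeftMoves, G.moveLeft i ⧏ x)
    (hR : ∀ j : G.RightMoves, x ⧏ G.moveRight j)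
    (hxL : ∀ k : x.LeftMoves,
      (∃ i : G.LeftMoves, ¬ G.moveLeft i ⧏ x.moveLeft k) ∨
      (∃ j : G.RightMoves, ¬ x.moveLeft k ⧏ G.moveRight j))
    (hxR : ∀ k : x.RightMoves,
      (∃ i : G.LeftMoves, ¬ G.moveLeft i ⧏ x.moveRight k) ∨
      (∃ j : G.RightMoves, ¬ x.moveRight k ⧏ G.moveRight j)) :
    G ≈ x := by
  exact hx.equiv_of_fits ⟨hL, hR⟩ (fun k => not_fits_iff.2 (hxL k))
    fun k => not_fits_iff.2 (hxR k)
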